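/- arXiv:1905.06059 — 3 statements merged into one kernel-verified Lean document; each statement's English description precedes it below -/
import Mathlib

section
/- (Vanishing trace of the adjoint.) Let (Ω,𝒜,μ) be a probability measure space, n ∈ ℕ, and let L : D(L) ⊆ L²(Ω;Sym_n(ℝ)) → L²(Ω;ℝⁿ) be a closed densely defined linear operator with adjoint L* : D(L*) ⊆ L²(Ω;ℝⁿ) → L²(Ω;Sym_n(ℝ)). Let P : L²(Ω;ℝⁿ) → L²(Ω;ℝⁿ) be an orthogonal projector, and let ℛ ⊆ L²(Ω;ℝ) be a dense linear subspace such that for every q ∈ ℛ the matrix field qI lies in D(L) and P L(qI) = 0. Then for every ζ ∈ D(L*) with Pζ = ζ, the pointwise trace of L*ζ vanishes: tr(L*ζ) = 0 almost everywhere in Ω. -/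
open MeasureTheory

/-! Testing the adjoint relation against `qI` shows that `(tr L*ζ, q) = (L(qI), ζ)`, and since
`ζ = Pζ` with `P` self-adjoint this equals `(P L(qI), ζ) = 0`. So `tr L*ζ` is orthogonal to the
dense subspace `ℛ`, hence vanishes. -/

section

variable {Ω ι : Type*} [MeasurableSpace Ω] [Fintype ι] {μ : Measure Ω}

theorem memLp_trace {E : Type*} [NormedAddCommGroup E] {p : ENNReal} {A : Ω → Matrix ι ι E}
    (hA : ∀ i, MemLp (fun x => A x i i) p μ) : MemLp (fun x => (A x).trace) p μ := by
  simpa [Matrix.trace, Matrix.diag, Finset.sum_fn] using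
    memLp_finsetSum' Finset.univ fun i _ => hA i

theorem integral_inner_eq_zero_of_isSelfAdjoint_of_map_eq_zero
    (P : (Ω → ι → ℝ) → Ω → ι → ℝ)
    (hP : ∀ f g : Ω → ι → ℝ, MemLp f 2 μ → MemLp g 2 μ →
      ∫ x, ∑ i, P f x i * g x i ∂μ = ∫ x, ∑ i, f x i * P g x i ∂μ)
    {f g : Ω → ι → ℝ} (hf : MemLp f 2 μ) (hg : MemLp g 2 μ) (hPf : P f = 0) (hPg : P g = g) :
    ∫ x, ∑ i, f x i * g x i ∂μ = 0 := by
  calc ∫ x, ∑ i, f x i * g x i ∂μ = ∫ x, ∑ i, f x i * P g x i ∂μ := by rw [hPg]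
    _ = ∫ x, ∑ i, P f x i * g x i ∂μ := (hP f g hf hg).symm
    _ = 0 := by simp [hPf]

end

theorem Matrix.sum_sum_smul_one_mul_eq_trace_mul {ι R : Type*} [Fintype ι] [DecidableEq ι]
    [CommSemiring R] (c : R) (A : Matrix ι ι R) :
    ∑ i, ∑ j, (c • (1 : Matrix ι ι R)) i j * A i j = A.trace * c := by
  simp [Matrix.one_apply, Matrix.trace, Finset.mul_sum, mul_comm]

theorem vanishing_trace_of_adjoint_general {Ω : Type*} [MeasurableSpace Ω]
    {n : ℕ} (μ : Measure Ω)
    (DL : Set (Ω → Matrix (Fin n) (Fin n) ℝ))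
    (L : (Ω → Matrix (Fin n) (Fin n) ℝ) → (Ω → Fin n → ℝ))
    (DLstar : Set (Ω → Fin n → ℝ))
    (Lstar : (Ω → Fin n → ℝ) → (Ω → Matrix (Fin n) (Fin n) ℝ))
    (P : (Ω → Fin n → ℝ) → (Ω → Fin n → ℝ))
    (R : Set (Ω → ℝ))
    -- all relevant fields are square integrable
    (hLstarL2 : ∀ ζ ∈ DLstar, ∀ i j, MemLp (fun x => Lstar ζ x i j) 2 μ)
    (hLqIL2 : ∀ q ∈ R, MemLp
      (fun x => L (fun y => q y • (1 : Matrix (Fin n) (Fin n) ℝ)) x) 2 μ)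
    -- the adjoint relation `(L M, ζ) = (M, L* ζ)`
    (hadj : ∀ M ∈ DL, ∀ ζ ∈ DLstar,
      ∫ x, ∑ i, L M x i * ζ x i ∂μ
        = ∫ x, ∑ i, ∑ j, M x i j * Lstar ζ x i j ∂μ)
    -- `P` is self-adjoint
    (hPselfadj : ∀ f g : Ω → Fin n → ℝ, MemLp f 2 μ → MemLp g 2 μ →
      ∫ x, ∑ i, P f x i * g x i ∂μ = ∫ x, ∑ i, f x i * P g x i ∂μ)
    -- `ℛ` consists of bounded square-integrable functions and is dense in `L²`
    (hRdense : ∀ g : Ω → ℝ, MemLp g 2 μ →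
      (∀ q ∈ R, ∫ x, g x * q x ∂μ = 0) → g =ᵐ[μ] 0)
    -- `qI ∈ D(L)` and `P L (qI) = 0` for every sufficiently smooth `q`
    (hqI : ∀ q ∈ R, (fun x => q x • (1 : Matrix (Fin n) (Fin n) ℝ)) ∈ DL)
    (hPL : ∀ q ∈ R,
      P (L fun x => q x • (1 : Matrix (Fin n) (Fin n) ℝ)) = fun _ _ => 0)
    -- the given element of `D(L*)`, fixed by `P`
    (ζ : Ω → Fin n → ℝ) (hζ : ζ ∈ DLstar) (hζL2 : MemLp ζ 2 μ)
    (hPζ : P ζ = ζ) :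
    ∀ᵐ x ∂μ, Matrix.trace (Lstar ζ x) = 0 := by
  refine hRdense _ (memLp_trace fun i => hLstarL2 ζ hζ i i) fun q hq => ?_
  calc ∫ x, (Lstar ζ x).trace * q x ∂μ
      = ∫ x, ∑ i, ∑ j, (q x • (1 : Matrix (Fin n) (Fin n) ℝ)) i j * Lstar ζ x i j ∂μ := by
        simp only [Matrix.sum_sum_smul_one_mul_eq_trace_mul]
    _ = ∫ x, ∑ i, L (fun y => q y • (1 : Matrix (Fin n) (Fin n) ℝ)) x i * ζ x i ∂μ :=
        (hadj _ (hqI q hq) ζ hζ).symm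
    _ = 0 := integral_inner_eq_zero_of_isSelfAdjoint_of_map_eq_zero P hPselfadj
        (hLqIL2 q hq) hζL2 (hPL q hq) hPζ

/-- **Vanishing trace of the adjoint.** Let `(Ω,μ)` be a probability space and
`L : D(L) ⊆ L²(Ω;Symₙ) → L²(Ω;ℝⁿ)` a closed densely defined operator with
adjoint `L*`, `P` an orthogonal (self-adjoint) projector of `L²(Ω;ℝⁿ)`, and
`ℛ ⊆ L²(Ω;ℝ)` a dense subspace of bounded functions such that `qI ∈ D(L)` and
`P L(qI) = 0` for all `q ∈ ℛ`. Then for every `ζ ∈ D(L*)` with `Pζ = ζ`, the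
pointwise trace of `L*ζ` vanishes almost everywhere.

Vector fields are represented as square-integrable functions `Ω → Fin n → ℝ`,
matrix fields as functions `Ω → Matrix (Fin n) (Fin n) ℝ`, and the relevant
`L²` inner products are written as explicit integrals. -/
theorem vanishing_trace_of_adjoint {Ω : Type*} [MeasurableSpace Ω]
    {n : ℕ} (μ : Measure Ω) [IsProbabilityMeasure μ]
    (DL : Set (Ω → Matrix (Fin n) (Fin n) ℝ))
    (L : (Ω → Matrix (Fin n) (Fin n) ℝ) → (Ω → Fin n → ℝ))
    (DLstar : Set (Ω → Fin n → ℝ))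
    (Lstar : (Ω → Fin n → ℝ) → (Ω → Matrix (Fin n) (Fin n) ℝ))
    (P : (Ω → Fin n → ℝ) → (Ω → Fin n → ℝ))
    (R : Set (Ω → ℝ))
    -- all relevant fields are square integrable
    (hLstarL2 : ∀ ζ ∈ DLstar, ∀ i j, MemLp (fun x => Lstar ζ x i j) 2 μ)
    (hLqIL2 : ∀ q ∈ R, MemLp
      (fun x => L (fun y => q y • (1 : Matrix (Fin n) (Fin n) ℝ)) x) 2 μ)
    -- the adjoint relation `(L M, ζ) = (M, L* ζ)`
    (hadj : ∀ M ∈ DL, ∀ ζ ∈ DLstar,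
      ∫ x, ∑ i, L M x i * ζ x i ∂μ
        = ∫ x, ∑ i, ∑ j, M x i j * Lstar ζ x i j ∂μ)
    -- `P` is self-adjoint
    (hPselfadj : ∀ f g : Ω → Fin n → ℝ, MemLp f 2 μ → MemLp g 2 μ →
      ∫ x, ∑ i, P f x i * g x i ∂μ = ∫ x, ∑ i, f x i * P g x i ∂μ)
    -- `ℛ` consists of bounded square-integrable functions and is dense in `L²`
    (hRbdd : ∀ q ∈ R, ∃ C, ∀ x, |q x| ≤ C)
    (hRL2 : ∀ q ∈ R, MemLp q 2 μ)
    (hRdense : ∀ g : Ω → ℝ, MemLp g 2 μ →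
      (∀ q ∈ R, ∫ x, g x * q x ∂μ = 0) → g =ᵐ[μ] 0)
    -- `qI ∈ D(L)` and `P L (qI) = 0` for every sufficiently smooth `q`
    (hqI : ∀ q ∈ R, (fun x => q x • (1 : Matrix (Fin n) (Fin n) ℝ)) ∈ DL)
    (hPL : ∀ q ∈ R,
      P (L fun x => q x • (1 : Matrix (Fin n) (Fin n) ℝ)) = fun _ _ => 0)
    -- the given element of `D(L*)`, fixed by `P`
    (ζ : Ω → Fin n → ℝ) (hζ : ζ ∈ DLstar) (hζL2 : MemLp ζ 2 μ)
    (hPζ : P ζ = ζ) :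
    ∀ᵐ x ∂μ, Matrix.trace (Lstar ζ x) = 0 :=
  vanishing_trace_of_adjoint_general μ DL L DLstar Lstar P R hLstarL2 hLqIL2 hadj hPselfadj hRdense
    hqI hPL ζ hζ hζL2 hPζ
end

section
/- (Block positive-semidefiniteness inequality.) Let d ≥ 1, k ≥ 0, χ ∈ ℝ, let S be a symmetric d×d real matrix with tr S = 2χ, and let w ∈ ℝ^d. If the symmetric (d+1)×(d+1) block matrix [[S + (χ+k)I_d, w],[wᵀ, χ+k]] is positive semidefinite, then |w|² ≤ (d+2)(χ+k)². -/
namespace Matrix.PosSemidef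

variable {n R : Type*} [Field R] [LinearOrder R] [IsStrictOrderedRing R] [StarRing R]
  [TrivialStar R] {M : Matrix n n R}

theorem sq_apply_le_mul_diag [Fintype n] [DecidableEq n] (hM : M.PosSemidef) (i j : n) :
    M i j ^ 2 ≤ M i i * M j j := by
  have hsymm : M j i = M i j := by
    simpa using congrFun (congrFun hM.isHermitian.eq i) j
  have hquad : ∀ s : R, 0 ≤ M j j * (s * s) + 2 * M i j * s + M i i := fun s => by
    have := hM.dotProduct_mulVec_nonneg (Pi.single i 1 + s • Pi.single j 1)
    simp only [star_trivial, mulVec_add, mulVec_smul, dotProduct_add, add_dotProduct,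
      dotProduct_smul, smul_dotProduct, mulVec_single_one, single_one_dotProduct,
      smul_eq_mul, col_apply, hsymm] at this
    linear_combination this
  have := discrim_le_zero hquad
  rw [discrim] at this
  linarith

end Matrix.PosSemidef

theorem block_psd_inequality_general (d : ℕ) (k χ : ℝ) (hk : 0 ≤ k)
    (S : Matrix (Fin d) (Fin d) ℝ) (htr : S.trace = 2 * χ)
    (w : Fin d → ℝ)
    (hpsd : (Matrix.fromBlocks
        (S + (χ + k) • (1 : Matrix (Fin d) (Fin d) ℝ))
        (Matrix.of fun i (_ : Unit) => w i)
        (Matrix.of fun (_ : Unit) j => w j)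
        (Matrix.of fun (_ : Unit) (_ : Unit) => χ + k)).PosSemidef) :
    ∑ i, (w i) ^ 2 ≤ (d + 2) * (χ + k) ^ 2 := by
  set c := χ + k
  have hc : 0 ≤ c := by simpa using hpsd.diag_nonneg (i := Sum.inr ())
  have hminor : ∀ i, w i ^ 2 ≤ (S i i + c) * c := fun i => by
    simpa using hpsd.sq_apply_le_mul_diag (Sum.inl i) (Sum.inr ())
  have hsum : ∑ i, (S i i + c) * c = (2 * χ + d * c) * c := by
    have hdiag : ∑ i, S i i = 2 * χ := htr
    rw [← Finset.sum_mul, Finset.sum_add_distrib, hdiag]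
    simp
  calc ∑ i, w i ^ 2 ≤ ∑ i, (S i i + c) * c := Finset.sum_le_sum fun i _ => hminor i
    _ = (2 * χ + d * c) * c := hsum
    _ ≤ (d + 2) * c ^ 2 := by nlinarith [mul_le_mul_of_nonneg_right (show χ ≤ c by linarith) hc]

/-- **Block positive-semidefiniteness inequality.** Let `d ≥ 1`, `k ≥ 0`,
`χ ∈ ℝ`, `S` a symmetric `d×d` real matrix with `tr S = 2χ`, and `w ∈ ℝ^d`.
If the symmetric `(d+1)×(d+1)` block matrix `[[S + (χ+k)I, w],[wᵀ, χ+k]]` is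
positive semidefinite, then `|w|² ≤ (d+2)(χ+k)²`. -/
theorem block_psd_inequality (d : ℕ) (hd : 1 ≤ d) (k χ : ℝ) (hk : 0 ≤ k)
    (S : Matrix (Fin d) (Fin d) ℝ) (hS : S.IsSymm) (htr : S.trace = 2 * χ)
    (w : Fin d → ℝ)
    (hpsd : (Matrix.fromBlocks
        (S + (χ + k) • (1 : Matrix (Fin d) (Fin d) ℝ))
        (Matrix.of fun i (_ : Unit) => w i)
        (Matrix.of fun (_ : Unit) j => w j)
        (Matrix.of fun (_ : Unit) (_ : Unit) => χ + k)).PosSemidef) :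
    ∑ i, (w i) ^ 2 ≤ (d + 2) * (χ + k) ^ 2 :=
  block_psd_inequality_general d k χ hk S htr w hpsd
end

section
/- (Conservativity for the multidimensional Camassa–Holm system.) Let d ≥ 1, let u : ℝ^d → ℝ^d be a smooth ℤ^d-periodic vector field, and set p := div u. Then ∫_{[0,1]^d} ( −div(u⊗u) · u + ( −div(p·u) + ½|u|² + ½p² ) · p ) dx = 0. -/
open Set MeasureTheory

noncomputable section

/-- The partial derivative `∂_j f` of a scalar field on `ℝ^d`. -/
def pd {d : ℕ} (j : Fin d) (f : (Fin d → ℝ) → ℝ) : (Fin d → ℝ) → ℝ :=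
  fun x => fderiv ℝ f x (Pi.single j 1)

/-- The tensor product `(a ⊗ c)ᵢⱼ = aᵢ cⱼ` of two vector fields. -/
def tens {d : ℕ} (a c : (Fin d → ℝ) → Fin d → ℝ) :
    (Fin d → ℝ) → Fin d → Fin d → ℝ :=
  fun x i j => a x i * c x j

/-- The divergence of a matrix field, `(div M)ᵢ = ∑ⱼ ∂ⱼ Mᵢⱼ`. -/
def divM {d : ℕ} (M : (Fin d → ℝ) → Fin d → Fin d → ℝ) :
    (Fin d → ℝ) → Fin d → ℝ :=
  fun x i => ∑ j, pd j (fun y => M y i j) x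

/-- The divergence of a vector field. -/
def divV {d : ℕ} (u : (Fin d → ℝ) → Fin d → ℝ) : (Fin d → ℝ) → ℝ :=
  fun x => ∑ i, pd i (fun y => u y i) x

/-- A vector field is smooth and `ℤ^d`-periodic. -/
def SmoothPeriodic {d : ℕ} (u : (Fin d → ℝ) → Fin d → ℝ) : Prop :=
  (∀ i, ContDiff ℝ (⊤ : ℕ∞) fun x => u x i) ∧
    ∀ (x : Fin d → ℝ) (z : Fin d → ℤ), u (x + fun i => (z i : ℝ)) = u x

section Aux

variable {d : ℕ}

lemma CH_alg {n : ℕ} (A q : Fin n → ℝ) (D : Fin n → Fin n → ℝ) :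
    (∑ i, (-(∑ j, (D i j * A j + A i * D j j))) * A i) +
      (-(∑ i, (q i * A i + (∑ k, D k k) * D i i)) + (1/2) * (∑ i, A i ^ 2)
        + (1/2) * (∑ k, D k k) ^ 2) * (∑ k, D k k) =
    -(∑ j, (((1/2) * (∑ i, (2 * A i * D i j)) + (1/2) * (2 * (∑ k, D k k) * q j))
          * A j
        + ((1/2) * (∑ i, A i ^ 2) + (1/2) * (∑ k, D k k) ^ 2) * D j j)) := by
  set P := ∑ k, D k k with hP
  have h1 : ∀ i, (-(∑ j, (D i j * A j + A i * D j j))) * A i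
      = -((∑ j, D i j * A j) * A i) - A i ^ 2 * P := by
    intro i
    rw [Finset.sum_add_distrib, ← Finset.mul_sum, ← hP]
    ring
  have h2 : ∀ j, (((1/2) * (∑ i, (2 * A i * D i j)) + (1/2) * (2 * P * q j)) * A j
        + ((1/2) * (∑ i, A i ^ 2) + (1/2) * P ^ 2) * D j j)
      = (∑ i, A i * D i j) * A j + P * (q j * A j)
        + ((1/2) * (∑ i, A i ^ 2) + (1/2) * P ^ 2) * D j j := by
    intro j
    have : (∑ i, (2 * A i * D i j)) = 2 * ∑ i, A i * D i j := by
      rw [Finset.mul_sum]; exact Finset.sum_congr rfl fun i _ => by ring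
    rw [this]; ring
  simp only [h1, h2]
  have hS : (∑ x, (∑ i, A i * D i x) * A x) = ∑ x, (∑ j, D x j * A j) * A x := by
    simp only [Finset.sum_mul]
    rw [Finset.sum_comm]
    exact Finset.sum_congr rfl fun i _ => Finset.sum_congr rfl fun j _ => by ring
  simp only [Finset.sum_add_distrib, Finset.sum_sub_distrib]
  rw [Finset.sum_neg_distrib, ← Finset.sum_mul,
    ← Finset.mul_sum, ← Finset.mul_sum, ← Finset.mul_sum, ← hP, hS]
  ring

lemma pd_contDiff {f : (Fin d → ℝ) → ℝ} (hf : ContDiff ℝ (⊤ : ℕ∞) f) (j : Fin d) :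
    ContDiff ℝ (⊤ : ℕ∞) (pd j f) :=
  (hf.fderiv_right (by simp)).clm_apply contDiff_const

lemma pd_mul {f g : (Fin d → ℝ) → ℝ} {x : Fin d → ℝ}
    (hf : DifferentiableAt ℝ f x) (hg : DifferentiableAt ℝ g x) (j : Fin d) :
    pd j (fun y => f y * g y) x = pd j f x * g x + f x * pd j g x := by
  simp only [pd, fderiv_fun_mul hf hg, ContinuousLinearMap.add_apply,
    ContinuousLinearMap.coe_smul', Pi.smul_apply, smul_eq_mul]
  ring

lemma pd_sum {ι : Type*} (s : Finset ι) (f : ι → (Fin d → ℝ) → ℝ) {x : Fin d → ℝ}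
    (hf : ∀ i ∈ s, DifferentiableAt ℝ (f i) x) (j : Fin d) :
    pd j (fun y => ∑ i ∈ s, f i y) x = ∑ i ∈ s, pd j (f i) x := by
  simp only [pd, fderiv_fun_sum hf, ContinuousLinearMap.sum_apply]

lemma pd_sq {g : (Fin d → ℝ) → ℝ} {x : Fin d → ℝ}
    (hg : DifferentiableAt ℝ g x) (j : Fin d) :
    pd j (fun y => g y ^ 2) x = 2 * g x * pd j g x := by
  have : (fun y => g y ^ 2) = fun y => g y * g y := by funext y; ring
  rw [this, pd_mul hg hg]; ring

lemma pd_const_mul {g : (Fin d → ℝ) → ℝ} {x : Fin d → ℝ} (c : ℝ)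
    (hg : DifferentiableAt ℝ g x) (j : Fin d) :
    pd j (fun y => c * g y) x = c * pd j g x := by
  simp only [pd, fderiv_const_mul hg c, ContinuousLinearMap.coe_smul', Pi.smul_apply,
    smul_eq_mul]

lemma pd_add {f g : (Fin d → ℝ) → ℝ} {x : Fin d → ℝ}
    (hf : DifferentiableAt ℝ f x) (hg : DifferentiableAt ℝ g x) (j : Fin d) :
    pd j (fun y => f y + g y) x = pd j f x + pd j g x := by
  simp only [pd, fderiv_fun_add hf hg, ContinuousLinearMap.add_apply]

lemma fderiv_periodic {f : (Fin d → ℝ) → ℝ} (hf : Differentiable ℝ f)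
    {v : Fin d → ℝ} (hper : ∀ y, f (y + v) = f y) (x : Fin d → ℝ) :
    fderiv ℝ f (x + v) = fderiv ℝ f x := by
  have h1 : HasFDerivAt (fun y : Fin d → ℝ => y + v)
      (ContinuousLinearMap.id ℝ (Fin d → ℝ)) x := by
    simpa using (hasFDerivAt_id (𝕜 := ℝ) x).add_const v
  have h2 : HasFDerivAt (fun y => f (y + v)) (fderiv ℝ f (x + v)) x := by
    exact ((hf (x + v)).hasFDerivAt.comp x h1)
  have h3 : (fun y => f (y + v)) = f := funext hper
  rw [h3] at h2
  exact h2.fderiv.symm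

lemma pd_periodic {f : (Fin d → ℝ) → ℝ} (hf : Differentiable ℝ f)
    {v : Fin d → ℝ} (hper : ∀ y, f (y + v) = f y) (j : Fin d) (x : Fin d → ℝ) :
    pd j f (x + v) = pd j f x := by
  simp only [pd, fderiv_periodic hf hper x]

/-- Integral of the divergence of a smooth vector field which is periodic in each
coordinate direction vanishes on the unit cube. -/
lemma integral_divV_eq_zero {n : ℕ} (w : (Fin (n+1) → ℝ) → Fin (n+1) → ℝ)
    (hw : ∀ i, ContDiff ℝ (⊤ : ℕ∞) fun x => w x i)
    (hper : ∀ (x : Fin (n+1) → ℝ) (j : Fin (n+1)), w (x + Pi.single j 1) = w x) :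
    ∫ x in Set.Icc (0 : Fin (n+1) → ℝ) 1, divV w x = 0 := by
  have hcont : Continuous fun x => ∑ i, fderiv ℝ (fun y => w y i) x (Pi.single i 1) :=
    continuous_finset_sum _ fun i _ => (pd_contDiff (hw i) i).continuous
  have key := MeasureTheory.integral_divergence_of_hasFDerivAt_off_countable'
    (0 : Fin (n+1) → ℝ) 1 zero_le_one (fun i x => w x i)
    (fun i x => fderiv ℝ (fun y => w y i) x) ∅ Set.countable_empty
    (fun i => (hw i).continuous.continuousOn)
    (fun x _ i => ((hw i).differentiable (by simp) x).hasFDerivAt)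
    (hcont.continuousOn.integrableOn_compact isCompact_Icc)
  simp only [Pi.one_apply, Pi.zero_apply] at key
  have hfb : ∀ (i : Fin (n+1)) (y : Fin n → ℝ),
      (Fin.insertNth i (1:ℝ) y : Fin (n+1) → ℝ)
        = (Fin.insertNth i (0:ℝ) y : Fin (n+1) → ℝ) + Pi.single i 1 := by
    intro i y
    funext k
    rcases eq_or_ne k i with rfl | h
    · simp
    · obtain ⟨j, rfl⟩ := Fin.exists_succAbove_eq h
      simp [Pi.single_eq_of_ne (Fin.succAbove_ne i j)]
  calc ∫ x in Set.Icc (0 : Fin (n+1) → ℝ) 1, divV w x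
      = ∫ x in Set.Icc (0 : Fin (n+1) → ℝ) 1,
          ∑ i, fderiv ℝ (fun y => w y i) x (Pi.single i 1) := rfl
    _ = _ := key
    _ = 0 := by
      apply Finset.sum_eq_zero
      intro i _
      have : (fun y : Fin n → ℝ => w (Fin.insertNth i (1:ℝ) y) i)
          = fun y => w (Fin.insertNth i (0:ℝ) y) i := by
        funext y
        rw [hfb, hper]
      rw [this, sub_self]

end Aux

/-- **Conservativity for the multidimensional Camassa–Holm system.** For a
smooth `ℤ^d`-periodic vector field `u` with `p := div u`,
`∫_{[0,1]^d} ( −div(u⊗u)·u + (−div(p·u) + ½|u|² + ½p²)·p ) = 0`. -/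
theorem camassa_holm_conservativity (d : ℕ) (hd : 1 ≤ d)
    (u : (Fin d → ℝ) → Fin d → ℝ) (hu : SmoothPeriodic u) :
    ∫ x in univ.pi fun _ : Fin d => Icc (0 : ℝ) 1,
      ((∑ i, (-(divM (tens u u) x i)) * u x i) +
        (-(divV (fun y i => divV u y * u y i) x)
            + (1 / 2) * (∑ i, (u x i) ^ 2) + (1 / 2) * (divV u x) ^ 2)
          * divV u x) = 0 := by
  obtain ⟨n, rfl⟩ : ∃ n, d = n + 1 := ⟨d - 1, (Nat.succ_pred_eq_of_pos hd).symm⟩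
  obtain ⟨hsm, hper⟩ := hu
  have hD : ∀ i, Differentiable ℝ fun x => u x i := fun i => (hsm i).differentiable (by simp)
  -- the divergence p = div u is smooth
  have hpsm : ContDiff ℝ (⊤ : ℕ∞) (divV u) := by
    unfold divV
    exact ContDiff.sum fun i _ => pd_contDiff (hsm i) i
  have hpD : Differentiable ℝ (divV u) := hpsm.differentiable (by simp)
  -- periodicity in coordinate directions
  have hper1 : ∀ (x : Fin (n+1) → ℝ) (j : Fin (n+1)), u (x + Pi.single j 1) = u x := by
    intro x j
    have hcast : (fun i => ((Pi.single j 1 : Fin (n+1) → ℤ) i : ℝ)) = Pi.single j (1:ℝ) := by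
      funext i
      rcases eq_or_ne i j with rfl | h
      · simp
      · simp [Pi.single_eq_of_ne h]
    rw [← hcast]
    exact hper x _
  have hcomp1 : ∀ (x : Fin (n+1) → ℝ) (j i : Fin (n+1)),
      u (x + Pi.single j 1) i = u x i := fun x j i => by rw [hper1]
  have hpper : ∀ (x : Fin (n+1) → ℝ) (j : Fin (n+1)),
      divV u (x + Pi.single j 1) = divV u x := by
    intro x j
    unfold divV
    exact Finset.sum_congr rfl fun i _ =>
      pd_periodic (hD i) (fun y => hcomp1 y j i) i x
  -- the flux field w
  set F : (Fin (n+1) → ℝ) → ℝ :=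
    fun y => (1/2) * (∑ i, (u y i) ^ 2) + (1/2) * (divV u y) ^ 2 with hFdef
  set w : (Fin (n+1) → ℝ) → Fin (n+1) → ℝ := fun y j => F y * u y j with hwdef
  have hSsm : ContDiff ℝ (⊤ : ℕ∞) fun y => ∑ i, (u y i) ^ 2 :=
    ContDiff.sum fun i _ => (hsm i).pow 2
  have hFsm : ContDiff ℝ (⊤ : ℕ∞) F :=
    (contDiff_const.mul hSsm).add (contDiff_const.mul (hpsm.pow 2))
  have hwsm : ∀ j, ContDiff ℝ (⊤ : ℕ∞) fun y => w y j := fun j => hFsm.mul (hsm j)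
  have hwper : ∀ (x : Fin (n+1) → ℝ) (j : Fin (n+1)), w (x + Pi.single j 1) = w x := by
    intro x j
    funext k
    simp only [hwdef, hFdef, hpper x j, hper1 x j]
  -- pointwise identity: the integrand is -div w
  have hpt : ∀ x : Fin (n+1) → ℝ,
      ((∑ i, (-(divM (tens u u) x i)) * u x i) +
        (-(divV (fun y i => divV u y * u y i) x)
            + (1 / 2) * (∑ i, (u x i) ^ 2) + (1 / 2) * (divV u x) ^ 2)
          * divV u x) = -(divV w x) := by
    intro x
    have hA : ∀ i, divM (tens u u) x i
        = ∑ j, (pd j (fun y => u y i) x * u x j + u x i * pd j (fun y => u y j) x) := by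
      intro i
      exact Finset.sum_congr rfl fun j _ => pd_mul (hD i x) (hD j x) j
    have hB : divV (fun y i => divV u y * u y i) x
        = ∑ i, (pd i (divV u) x * u x i + divV u x * pd i (fun y => u y i) x) :=
      Finset.sum_congr rfl fun i _ => pd_mul (hpD x) (hD i x) i
    have hpdF : ∀ j, pd j F x
        = (1/2) * (∑ i, 2 * u x i * pd j (fun y => u y i) x)
          + (1/2) * (2 * divV u x * pd j (divV u) x) := by
      intro j
      have h1 : pd j F x = pd j (fun y => (1/2) * (∑ i, (u y i) ^ 2)) x
          + pd j (fun y => (1/2) * (divV u y) ^ 2) x := by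
        rw [hFdef]
        exact pd_add ((contDiff_const.mul hSsm).differentiable (by simp) x)
          ((contDiff_const.mul (hpsm.pow 2)).differentiable (by simp) x) j
      rw [h1, pd_const_mul (g := fun y => ∑ i, (u y i) ^ 2) (1/2)
          (hSsm.differentiable (by simp) x) j,
        pd_const_mul (g := fun y => divV u y ^ 2) (1/2)
          ((hpsm.pow 2).differentiable (by simp) x) j,
        pd_sum Finset.univ (fun i y => (u y i) ^ 2)
          (fun i _ => ((hsm i).pow 2).differentiable (by simp) x) j,
        pd_sq (g := divV u) (hpD x) j]
      congr 2
      exact Finset.sum_congr rfl fun i _ => pd_sq (hD i x) j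
    have hC : divV w x = ∑ j, (pd j F x * u x j + F x * pd j (fun y => u y j) x) :=
      Finset.sum_congr rfl fun j _ =>
        pd_mul (hFsm.differentiable (by simp) x) (hD j x) j
    simp only [hA, hB, hC, hpdF]
    simp only [hFdef]
    exact CH_alg (fun i => u x i) (fun j => pd j (divV u) x)
      (fun i j => pd j (fun y => u y i) x)
  have hset : (univ.pi fun _ : Fin (n+1) => Icc (0 : ℝ) 1)
      = Set.Icc (0 : Fin (n+1) → ℝ) 1 := Set.pi_univ_Icc 0 1
  rw [hset]
  simp only [hpt]
  rw [integral_neg, integral_divV_eq_zero w hwsm hwper, neg_zero]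
end
end
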